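/- The only linear relation α ⊆ K × K that is an invertible phase of the monoid N = {(x,x,x) : x ∈ K} in LinRel_K is the identity relation {(x,x) : x ∈ K}; likewise the only invertible phase of the monoid B = {(x,y,x+y) : x,y ∈ K} is the identity. Hence both phase groups are trivial. -/
import Mathlib


/-- The linear relation `N = {(x,x,x) : x ∈ K}`. -/
def Nrel (K : Type*) [Field K] : Submodule K (K × K × K) where
  carrier := {p | p.2.1 = p.1 ∧ p.2.2 = p.1}
  add_mem' := by
    rintro a b ⟨h1, h2⟩ ⟨h3, h4⟩
    exact ⟨by simp [h1, h3], by simp [h2, h4]⟩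
  zero_mem' := ⟨rfl, rfl⟩
  smul_mem' := by
    rintro c a ⟨h1, h2⟩
    exact ⟨by simp [h1], by simp [h2]⟩

/-- The linear relation `B = {(x,y,x+y) : x,y ∈ K}`. -/
def Brel (K : Type*) [Field K] : Submodule K (K × K × K) where
  carrier := {p | p.2.2 = p.1 + p.2.1}
  add_mem' := by
    rintro a b h1 h3
    simp only [Set.mem_setOf_eq] at *
    simp [h1, h3]; ring
  zero_mem' := by simp
  smul_mem' := by
    rintro c a h1
    simp only [Set.mem_setOf_eq] at *
    simp [h1]; ring

/-- The identity linear relation `{(x,x) : x ∈ K}`. -/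
def idRelL (K : Type*) [Field K] : Submodule K (K × K) where
  carrier := {p | p.2 = p.1}
  add_mem' := by
    rintro a b h1 h2
    simp only [Set.mem_setOf_eq] at *
    simp [h1, h2]
  zero_mem' := rfl
  smul_mem' := by
    rintro c a h1
    simp only [Set.mem_setOf_eq] at *
    simp [h1]

/-- `α` is an invertible phase of the monoid relation `M ⊆ K³` in `LinRel_K`. -/
def IsInvertiblePhase {K : Type*} [Field K] (M : Submodule K (K × K × K))
    (α : Submodule K (K × K)) : Prop :=
  (∃ β : Submodule K (K × K),
      (∀ x y : K, (∃ t, (x, t) ∈ α ∧ (t, y) ∈ β) ↔ x = y) ∧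
      (∀ x y : K, (∃ t, (x, t) ∈ β ∧ (t, y) ∈ α) ↔ x = y)) ∧
  (∀ x y z : K,
      (∃ x', (x, x') ∈ α ∧ (x', y, z) ∈ M) ↔ (∃ t, (x, y, t) ∈ M ∧ (t, z) ∈ α))

lemma mem_Nrel' {K : Type*} [Field K] (p : K × K × K) :
    p ∈ Nrel K ↔ p.2.1 = p.1 ∧ p.2.2 = p.1 := Iff.rfl

lemma mem_Brel' {K : Type*} [Field K] (p : K × K × K) :
    p ∈ Brel K ↔ p.2.2 = p.1 + p.2.1 := Iff.rfl

lemma mem_idRelL' {K : Type*} [Field K] (p : K × K) :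
    p ∈ idRelL K ↔ p.2 = p.1 := Iff.rfl

/-- The only invertible phase of `N` (and likewise of `B`) in `LinRel_K` is the identity
relation: both phase groups are trivial. -/
theorem stmt12 (K : Type*) [Field K] :
    (∀ α : Submodule K (K × K), IsInvertiblePhase (Nrel K) α → α = idRelL K) ∧
    (∀ α : Submodule K (K × K), IsInvertiblePhase (Brel K) α → α = idRelL K) := by
  constructor
  · rintro α ⟨⟨β, hβ1, _⟩, hph⟩
    have hsub : ∀ x y : K, (x, y) ∈ α → y = x := by
      intro x y hxy
      obtain ⟨t, ht, _⟩ := (hph x y y).mp ⟨y, hxy, rfl, rfl⟩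
      exact ht.1
    ext ⟨x, y⟩
    rw [mem_idRelL']; dsimp only
    constructor
    · exact hsub x y
    · rintro rfl
      obtain ⟨t, hxt, _⟩ := (hβ1 y y).mpr rfl
      have := hsub y t hxt
      rwa [this] at hxt
  · rintro α ⟨⟨_, _, hβ2⟩, hph⟩
    have h0 : ∀ c : K, (0, c) ∈ α → c = 0 := by
      intro c hc
      exact ((hβ2 0 c).mp ⟨0, (by exact Submodule.zero_mem _), hc⟩).symm
    ext ⟨x, y⟩
    rw [mem_idRelL']; dsimp only
    constructor
    · intro hxy
      obtain ⟨t, htB, htα⟩ := (hph x (-x) (y + -x)).mp ⟨y, hxy, rfl⟩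
      rw [mem_Brel'] at htB
      simp only at htB
      rw [htB] at htα
      simp only [add_neg_cancel] at htα
      have := h0 _ htα
      linear_combination this
    · rintro rfl
      obtain ⟨t, htB, htα⟩ := (hph 0 y y).mp ⟨0, Submodule.zero_mem _, by rw [mem_Brel']; simp⟩
      rw [mem_Brel'] at htB
      simp only at htB
      rw [htB] at htα
      simpa using htα
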